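/- arXiv:1609.01269 — 8 statements merged into one kernel-verified Lean document; each statement's English description precedes it below -/
import Mathlib

section
/- Let f : ℝ → ℝ be five times continuously differentiable. Then for every λ ∈ ℝ, λ⁶·f⁽⁵⁾(λ)·f″(λ) = −60λ³·(f″(λ))² + 9λ⁵·(f‴(λ))² + g′(λ), where g : ℝ → ℝ is the (differentiable) function g(λ) = λ⁶·f⁽⁴⁾(λ)·f″(λ) − 6λ⁵·f‴(λ)·f″(λ) + 15λ⁴·(f″(λ))² − (1/2)·λ⁶·(f‴(λ))². -/
/-!
Only the product rule is involved: for a chain `u₀′ = u₁`, `u₁′ = u₂`, `u₂′ = u₃` (here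
`uₖ = f⁽ᵏ⁺²⁾`), differentiating `λ⁶u₂u₀ − 6λ⁵u₁u₀ + 15λ⁴u₀² − ½λ⁶u₁²` makes the mixed terms
`λ⁶u₂u₁`, `λ⁵u₂u₀`, `λ⁴u₁u₀` cancel, leaving `λ⁶u₃u₀ + 60λ³u₀² − 9λ⁵u₁²`.
-/

theorem ContDiff.hasDerivAt_iteratedDeriv {f : ℝ → ℝ} {n : WithTop ℕ∞} (hf : ContDiff ℝ n f)
    {k : ℕ} (hk : k < n) (x : ℝ) :
    HasDerivAt (iteratedDeriv k f) (iteratedDeriv (k + 1) f x) x := by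
  rw [iteratedDeriv_succ]
  exact (hf.differentiable_iteratedDeriv k hk x).hasDerivAt

theorem hasDerivAt_lambda6_by_parts {u₀ u₁ u₂ : ℝ → ℝ} {u₃ l : ℝ}
    (h₀ : HasDerivAt u₀ (u₁ l) l) (h₁ : HasDerivAt u₁ (u₂ l) l) (h₂ : HasDerivAt u₂ u₃ l) :
    HasDerivAt (fun t => t ^ 6 * u₂ t * u₀ t - 6 * t ^ 5 * u₁ t * u₀ t + 15 * t ^ 4 * u₀ t ^ 2
        - (1 / 2) * t ^ 6 * u₁ t ^ 2)
      (l ^ 6 * u₃ * u₀ l + 60 * l ^ 3 * u₀ l ^ 2 - 9 * l ^ 5 * u₁ l ^ 2) l := by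
  have hpow (n : ℕ) : HasDerivAt (fun t : ℝ => t ^ n) (n * l ^ (n - 1)) l := hasDerivAt_pow n l
  have h := (((hpow 6).mul h₂).mul h₀ |>.sub ((((hpow 5).const_mul 6).mul h₁).mul h₀)
    |>.add (((hpow 4).const_mul 15).mul (h₀.pow 2))
    |>.sub (((hpow 6).const_mul (1 / 2 : ℝ)).mul (h₁.pow 2)))
  refine h.congr_deriv ?_
  simp only [Pi.mul_apply, Pi.pow_apply]
  push_cast
  ring

/-- Differentiating-by-parts formula of type `λ⁶ f⁽⁵⁾ f″`:
`λ⁶ f⁽⁵⁾ f″ = −60λ³ (f″)² + 9λ⁵ (f‴)² + g′` with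
`g(λ) = λ⁶ f⁽⁴⁾ f″ − 6λ⁵ f‴ f″ + 15λ⁴ (f″)² − (1/2) λ⁶ (f‴)²`. -/
theorem diff_by_parts_lambda6 (f : ℝ → ℝ) (hf : ContDiff ℝ 5 f) (l : ℝ) :
    l ^ 6 * iteratedDeriv 5 f l * iteratedDeriv 2 f l =
      -60 * l ^ 3 * (iteratedDeriv 2 f l) ^ 2 + 9 * l ^ 5 * (iteratedDeriv 3 f l) ^ 2 +
      deriv (fun t => t ^ 6 * iteratedDeriv 4 f t * iteratedDeriv 2 f t
        - 6 * t ^ 5 * iteratedDeriv 3 f t * iteratedDeriv 2 f t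
        + 15 * t ^ 4 * (iteratedDeriv 2 f t) ^ 2
        - (1 / 2) * t ^ 6 * (iteratedDeriv 3 f t) ^ 2) l := by
  have hg := hasDerivAt_lambda6_by_parts (hf.hasDerivAt_iteratedDeriv (k := 2) (by norm_num) l)
    (hf.hasDerivAt_iteratedDeriv (k := 3) (by norm_num) l)
    (hf.hasDerivAt_iteratedDeriv (k := 4) (by norm_num) l)
  rw [hg.deriv]
  ring
end

section
/- For every natural number n ≥ 9 and every real number k with 0 < k < (n−8)/2, one has 6k⁴ + (144−12n)k³ + (6n²−204n+994)k² + (60n²−850n+2732)k + 94n²−1012n+2644 > 0. -/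
/-! Writing `n = 2k + 8 + t`, the coefficient becomes a polynomial in `k` and `t` all of whose
coefficients are positive, so it is positive as soon as `k > 0` and `t > 0`. -/

def bb1 (n k : ℝ) : ℝ :=
  6 * k ^ 4 + (144 - 12 * n) * k ^ 3 + (6 * n ^ 2 - 204 * n + 994) * k ^ 2
    + (60 * n ^ 2 - 850 * n + 2732) * k + 94 * n ^ 2 - 1012 * n + 2644

theorem bb1_two_mul_add_eight_add (k t : ℝ) :
    bb1 (2 * k + 8 + t) k =
      6 * k ^ 4 + 12 * k ^ 3 * t + 72 * k ^ 3 + 6 * k ^ 2 * t ^ 2 + 132 * k ^ 2 * t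
        + 342 * k ^ 2 + 60 * k * t ^ 2 + 486 * k * t + 756 * k + 94 * t ^ 2 + 492 * t + 564 := by
  unfold bb1; ring

theorem bb1_pos_of_lt {n k : ℝ} (hk : 0 < k) (hkn : k < (n - 8) / 2) : 0 < bb1 n k := by
  obtain ⟨t, ht, rfl⟩ : ∃ t, 0 < t ∧ n = 2 * k + 8 + t := ⟨n - 8 - 2 * k, by linarith, by ring⟩
  rw [bb1_two_mul_add_eight_add]
  positivity

theorem Bb1_pos_general (n : ℕ) (k : ℝ) (hk0 : 0 < k) (hk1 : k < ((n : ℝ) - 8) / 2) :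
    6 * k ^ 4 + (144 - 12 * (n : ℝ)) * k ^ 3 + (6 * (n : ℝ) ^ 2 - 204 * n + 994) * k ^ 2
      + (60 * (n : ℝ) ^ 2 - 850 * n + 2732) * k + 94 * (n : ℝ) ^ 2 - 1012 * n + 2644 > 0 :=
  bb1_pos_of_lt hk0 hk1

/-- Positivity of the coefficient `Bb₁` in the supercritical range `0 < k < (n−8)/2`. -/
theorem Bb1_pos (n : ℕ) (hn : 9 ≤ n) (k : ℝ) (hk0 : 0 < k) (hk1 : k < ((n : ℝ) - 8) / 2) :
    6 * k ^ 4 + (144 - 12 * (n : ℝ)) * k ^ 3 + (6 * (n : ℝ) ^ 2 - 204 * n + 994) * k ^ 2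
      + (60 * (n : ℝ) ^ 2 - 850 * n + 2732) * k + 94 * (n : ℝ) ^ 2 - 1012 * n + 2644 > 0 :=
  Bb1_pos_general n k hk0 hk1
end

section
/- For every real number n ≥ 21 and every real number k with (n−10)/2 − √n < k < (n−8)/2, one has −38k² + (38n−292)k − 6n² + 132n − 544 > 0. -/
/-! `Bb₂` is a concave quadratic in `k`, so it suffices to check it at the two ends of the
interval. At `k = (n - 8)/2` it equals `(7 (n - 2)² + 4)/2`. At `k = (n - 10)/2 - √n` it equals
`(7n² - 104n - 68 - 176√n)/2`, which is positive for `n ≥ 21` once `√n` is bounded by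
`(n + 25)/10` (AM-GM). -/

/-- The paper's coefficient `Bb₂`, with `k = 8/(p - 1)`. -/
def Bb₂ (n k : ℝ) : ℝ := -38 * k ^ 2 + (38 * n - 292) * k - 6 * n ^ 2 + 132 * n - 544

theorem quadratic_pos_of_pos_of_pos {a b c l u x : ℝ} (ha : a ≤ 0) (hl : l ≤ x) (hu : x ≤ u)
    (hql : 0 < a * l ^ 2 + b * l + c) (hqu : 0 < a * u ^ 2 + b * u + c) :
    0 < a * x ^ 2 + b * x + c := by
  rcases hl.eq_or_lt with rfl | hlx
  · exact hql
  have key : (u - l) * (a * x ^ 2 + b * x + c) =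
      (u - x) * (a * l ^ 2 + b * l + c) + (x - l) * (a * u ^ 2 + b * u + c)
        - a * ((u - l) * (x - l) * (u - x)) := by ring
  have hcurv : 0 ≤ -a * ((u - l) * (x - l) * (u - x)) :=
    mul_nonneg (neg_nonneg.2 ha) (mul_nonneg (mul_nonneg (sub_nonneg.2 (hlx.le.trans hu))
      (sub_pos.2 hlx).le) (sub_nonneg.2 hu))
  have hend : 0 < (u - x) * (a * l ^ 2 + b * l + c) + (x - l) * (a * u ^ 2 + b * u + c) :=
    add_pos_of_nonneg_of_pos (mul_nonneg (sub_nonneg.2 hu) hql.le) (mul_pos (sub_pos.2 hlx) hqu)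
  exact pos_of_mul_pos_right (by linarith) (sub_nonneg.2 (hlx.le.trans hu))

theorem Bb₂_pos_of_pos_of_pos {n l u k : ℝ} (hl : l ≤ k) (hu : k ≤ u)
    (hBl : 0 < Bb₂ n l) (hBu : 0 < Bb₂ n u) : 0 < Bb₂ n k := by
  have hq (x : ℝ) : Bb₂ n x = -38 * x ^ 2 + (38 * n - 292) * x + (-6 * n ^ 2 + 132 * n - 544) := by
    unfold Bb₂; ring
  rw [hq] at hBl hBu ⊢
  exact quadratic_pos_of_pos_of_pos (by norm_num) hl hu hBl hBu

theorem Bb₂_half_sub_four_pos (n : ℝ) : 0 < Bb₂ n ((n - 8) / 2) := by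
  have h : Bb₂ n ((n - 8) / 2) = (7 * (n - 2) ^ 2 + 4) / 2 := by unfold Bb₂; ring
  rw [h]
  positivity

theorem Bb₂_half_sub_five_sub_sqrt_pos {n : ℝ} (hn : 21 ≤ n) :
    0 < Bb₂ n ((n - 10) / 2 - √n) := by
  have hsq : √n ^ 2 = n := Real.sq_sqrt (by linarith)
  have h : Bb₂ n ((n - 10) / 2 - √n) = (7 * n ^ 2 - 104 * n - 68 - 176 * √n) / 2 := by
    unfold Bb₂; linear_combination (-38 : ℝ) * hsq
  have hamgm : 10 * √n ≤ n + 25 := by linarith [two_mul_le_add_sq 5 √n]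
  have hquad : 0 < (n - 21) * (35 * n + 127) + 127 := by
    have := mul_nonneg (sub_nonneg.2 hn) (by linarith : (0 : ℝ) ≤ 35 * n + 127)
    linarith
  rw [h]
  nlinarith [hamgm, hquad]

/-- Positivity of the coefficient `Bb₂` for `n ≥ 21` and `(n−10)/2 − √n < k < (n−8)/2`. -/
theorem Bb2_pos (n k : ℝ) (hn : 21 ≤ n)
    (hk0 : (n - 10) / 2 - Real.sqrt n < k) (hk1 : k < (n - 8) / 2) :
    -38 * k ^ 2 + (38 * n - 292) * k - 6 * n ^ 2 + 132 * n - 544 > 0 :=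
  Bb₂_pos_of_pos_of_pos hk0.le hk1.le (Bb₂_half_sub_five_sub_sqrt_pos hn) (Bb₂_half_sub_four_pos n)
end

section
/- For every natural number n ≥ 9 and every real number k with 0 < k < (n−8)/2, one has −4k⁶ + (12n−88)k⁵ + (−12n²+208n−860)k⁴ + (4n³−152n²+1544n−4304)k³ + (32n³−776n²+5408n−11196)k² + (92n³−1576n²+8428n−14040)k + 64n³−940n²+4368n−6372 > 0. -/
/-! Writing `n = 8 + 2k + b`, the polynomial becomes a polynomial in `k` and `b` all of whose
coefficients are positive, so it is positive whenever `k, b ≥ 0`. -/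

def aa1 (n k : ℝ) : ℝ :=
  -4 * k ^ 6 + (12 * n - 88) * k ^ 5
    + (-12 * n ^ 2 + 208 * n - 860) * k ^ 4
    + (4 * n ^ 3 - 152 * n ^ 2 + 1544 * n - 4304) * k ^ 3
    + (32 * n ^ 3 - 776 * n ^ 2 + 5408 * n - 11196) * k ^ 2
    + (92 * n ^ 3 - 1576 * n ^ 2 + 8428 * n - 14040) * k
    + 64 * n ^ 3 - 940 * n ^ 2 + 4368 * n - 6372

theorem aa1_add_eight_add_two_mul (k b : ℝ) :
    aa1 (8 + 2 * k + b) k =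
      4 * k ^ 6 + (12 * b + 72) * k ^ 5
        + (12 * b ^ 2 + 176 * b + 500) * k ^ 4
        + (4 * b ^ 3 + 136 * b ^ 2 + 952 * b + 1680) * k ^ 3
        + (32 * b ^ 3 + 544 * b ^ 2 + 2432 * b + 2924) * k ^ 2
        + (92 * b ^ 3 + 1016 * b ^ 2 + 3260 * b + 2856) * k
        + (64 * b ^ 3 + 596 * b ^ 2 + 1616 * b + 1180) := by
  unfold aa1; ring

theorem aa1_pos_of_nonneg_of_le {n k : ℝ} (hk : 0 ≤ k) (hkn : 2 * k ≤ n - 8) : 0 < aa1 n k := by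
  obtain ⟨b, hb, rfl⟩ : ∃ b, 0 ≤ b ∧ n = 8 + 2 * k + b := ⟨n - 8 - 2 * k, by linarith, by ring⟩
  rw [aa1_add_eight_add_two_mul]
  positivity

theorem Aa1_pos_general (n : ℕ) (k : ℝ) (hk0 : 0 < k) (hk1 : k < ((n : ℝ) - 8) / 2) :
    -4 * k ^ 6 + (12 * (n : ℝ) - 88) * k ^ 5
      + (-12 * (n : ℝ) ^ 2 + 208 * n - 860) * k ^ 4
      + (4 * (n : ℝ) ^ 3 - 152 * n ^ 2 + 1544 * n - 4304) * k ^ 3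
      + (32 * (n : ℝ) ^ 3 - 776 * n ^ 2 + 5408 * n - 11196) * k ^ 2
      + (92 * (n : ℝ) ^ 3 - 1576 * n ^ 2 + 8428 * n - 14040) * k
      + 64 * (n : ℝ) ^ 3 - 940 * n ^ 2 + 4368 * n - 6372 > 0 :=
  aa1_pos_of_nonneg_of_le hk0.le (by linarith)

/-- Positivity of the coefficient `Aa₁ = A₁ + a₁` in the supercritical range
`0 < k < (n−8)/2`. -/
theorem Aa1_pos (n : ℕ) (hn : 9 ≤ n) (k : ℝ) (hk0 : 0 < k) (hk1 : k < ((n : ℝ) - 8) / 2) :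
    -4 * k ^ 6 + (12 * (n : ℝ) - 88) * k ^ 5
      + (-12 * (n : ℝ) ^ 2 + 208 * n - 860) * k ^ 4
      + (4 * (n : ℝ) ^ 3 - 152 * n ^ 2 + 1544 * n - 4304) * k ^ 3
      + (32 * (n : ℝ) ^ 3 - 776 * n ^ 2 + 5408 * n - 11196) * k ^ 2
      + (92 * (n : ℝ) ^ 3 - 1576 * n ^ 2 + 8428 * n - 14040) * k
      + 64 * (n : ℝ) ^ 3 - 940 * n ^ 2 + 4368 * n - 6372 > 0 :=
  Aa1_pos_general n k hk0 hk1
end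

section
/- For every natural number n ≥ 18 and every real number k with max(0, (n−10)/2 − √n) < k < (n−8)/2, one has −28k² + (28n−216)k − 4n² + 96n − 408 > 0. -/
/-!
`Aa₃` is a concave quadratic in `k`, so it is positive strictly between two points where it is
nonnegative. At the right end `k = (n - 8)/2` it equals `3n² - 12n + 8`. For `n = 18` the left end
is `k = 0`, where it equals `24`; for `n ≥ 19` the left end is `k = (n - 10)/2 - √n`, where it
equals `3n² - 40n - 28 - 64√n`, which is nonnegative once `n ≥ 19`.
-/

open Real

lemma quadratic_pos_of_mem_Ioo {α β γ a b k : ℝ} (hα : α < 0)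
    (ha : 0 ≤ α * a ^ 2 + β * a + γ) (hb : 0 ≤ α * b ^ 2 + β * b + γ) (hk : k ∈ Set.Ioo a b) :
    0 < α * k ^ 2 + β * k + γ := by
  obtain ⟨hak, hkb⟩ := hk
  have hab : 0 < b - a := by linarith
  have chord : (b - a) * (α * k ^ 2 + β * k + γ) =
      (b - k) * (α * a ^ 2 + β * a + γ) + (k - a) * (α * b ^ 2 + β * b + γ)
        - α * (k - a) * (b - k) * (b - a) := by ring
  have hbump : 0 < -α * (k - a) * (b - k) * (b - a) :=
    mul_pos (mul_pos (mul_pos (neg_pos.mpr hα) (sub_pos.mpr hak)) (sub_pos.mpr hkb)) hab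
  refine pos_of_mul_pos_right (a := b - a) ?_ hab.le
  nlinarith [mul_nonneg (sub_pos.mpr hkb).le ha, mul_nonneg (sub_pos.mpr hak).le hb]

def Aa3 (n k : ℝ) : ℝ := -28 * k ^ 2 + (28 * n - 216) * k + (-4 * n ^ 2 + 96 * n - 408)

lemma Aa3_pos_of_mem_Ioo {n a b k : ℝ} (ha : 0 ≤ Aa3 n a) (hb : 0 ≤ Aa3 n b)
    (hk : k ∈ Set.Ioo a b) : 0 < Aa3 n k :=
  quadratic_pos_of_mem_Ioo (by norm_num) ha hb hk

lemma Aa3_right_endpoint (n : ℝ) : Aa3 n ((n - 8) / 2) = 3 * n ^ 2 - 12 * n + 8 := by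
  unfold Aa3; ring

lemma Aa3_left_endpoint {n : ℝ} (hn : 0 ≤ n) :
    Aa3 n ((n - 10) / 2 - √n) = 3 * n ^ 2 - 40 * n - 28 - 64 * √n := by
  have hs : √n ^ 2 = n := sq_sqrt hn
  unfold Aa3
  linear_combination (-28 : ℝ) * hs

lemma sixtyfour_mul_sqrt_le {n : ℝ} (hn : 19 ≤ n) : 64 * √n ≤ 3 * n ^ 2 - 40 * n - 28 := by
  have hs : √n ^ 2 = n := sq_sqrt (by linarith)
  nlinarith [sqrt_nonneg n, sq_nonneg (√n - 5), sq_nonneg (n - 19),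
    mul_nonneg (mul_nonneg (sub_nonneg.mpr hn) (sub_nonneg.mpr hn)) (sub_nonneg.mpr hn)]

/-- Positivity of the coefficient `Aa₃ = A₃ + a₃` for `n ≥ 18` and
`max(0, (n−10)/2 − √n) < k < (n−8)/2`. -/
theorem Aa3_pos (n : ℕ) (hn : 18 ≤ n) (k : ℝ)
    (hk0 : max 0 (((n : ℝ) - 10) / 2 - Real.sqrt n) < k) (hk1 : k < ((n : ℝ) - 8) / 2) :
    -28 * k ^ 2 + (28 * (n : ℝ) - 216) * k - 4 * (n : ℝ) ^ 2 + 96 * n - 408 > 0 := by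
  have hn' : (18 : ℝ) ≤ n := by exact_mod_cast hn
  have hright : 0 ≤ Aa3 n ((n - 8) / 2) := by rw [Aa3_right_endpoint]; nlinarith
  suffices 0 < Aa3 n k by unfold Aa3 at this; linarith
  rcases hn.eq_or_lt with rfl | h19
  · exact Aa3_pos_of_mem_Ioo (by norm_num [Aa3]) hright ⟨(le_max_left _ _).trans_lt hk0, hk1⟩
  · have h19' : (19 : ℝ) ≤ n := by exact_mod_cast h19
    have hleft : 0 ≤ Aa3 n ((n - 10) / 2 - √n) := by
      rw [Aa3_left_endpoint (by linarith)]
      linarith [sixtyfour_mul_sqrt_le h19']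
    exact Aa3_pos_of_mem_Ioo hleft hright ⟨(le_max_right _ _).trans_lt hk0, hk1⟩
end

section
/- For every real number n ≥ 118 and every real number k with (n−10)/2 − √n < k < (n−10)/2 + √n, one has W₁(k,n) := −4k⁷ + (12n−128)k⁶ + (−12n²+324n−1696)k⁵ + (4n³−264n²+3488n−12032)k⁴ + (68n³−2168n²+19056n−49216)k³ + (376n³−8176n²+55104n−115712)k² + (−(1/16)n⁶ + (3/4)n⁵ + 732n³ − 13520n² + 78336n − 144384)k + 384n³ − 6912n² + 39936n − 73728 > 0. -/
/-!
Write `n = m²` with `m = √n` and `k = (n - 10)/2 + m t`; the hypothesis on `k` says `|t| < 1`.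
Grading `W₁` by powers of `m`, the two top layers `m¹²(1/2 - 3t²/8) + m¹¹ (3/4) t (1 - t²)`
add up to at least `m¹²/8` once `m ≥ 2`, while each lower layer `m^d c_d(t)` is at least
`-B_d m^d` for a constant `B_d`. For `m ≥ 10` the top layer dominates.
-/

noncomputable def W1 (n k : ℝ) : ℝ :=
  -4 * k ^ 7 + (12 * n - 128) * k ^ 6 + (-12 * n ^ 2 + 324 * n - 1696) * k ^ 5
    + (4 * n ^ 3 - 264 * n ^ 2 + 3488 * n - 12032) * k ^ 4
    + (68 * n ^ 3 - 2168 * n ^ 2 + 19056 * n - 49216) * k ^ 3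
    + (376 * n ^ 3 - 8176 * n ^ 2 + 55104 * n - 115712) * k ^ 2
    + (-(1 / 16) * n ^ 6 + (3 / 4) * n ^ 5 + 732 * n ^ 3 - 13520 * n ^ 2
        + 78336 * n - 144384) * k
    + 384 * n ^ 3 - 6912 * n ^ 2 + 39936 * n - 73728

lemma W1_sq_add_mul (m t : ℝ) :
    W1 (m ^ 2) ((m ^ 2 - 10) / 2 + m * t) =
      m ^ 12 * (1 / 2 - 3 / 8 * t ^ 2) + m ^ 11 * (3 / 4 * t - 3 / 4 * t ^ 3)
        + m ^ 10 * (-51 / 8 + 9 / 4 * t ^ 2 + 3 / 2 * t ^ 4) + m ^ 9 * (-9 / 4 * t + 3 * t ^ 5)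
        + m ^ 8 * (3 / 4 + 11 * t ^ 2 - 9 * t ^ 4 - 2 * t ^ 6)
        + m ^ 7 * (-28 * t - 2 * t ^ 3 - 4 * t ^ 7)
        + m ^ 6 * (351 / 2 - 10 * t ^ 2 - 2 * t ^ 4 + 12 * t ^ 6)
        + m ^ 5 * (47 * t + 32 * t ^ 3 + 44 * t ^ 5) + m ^ 4 * (-157 - 150 * t ^ 2 - 132 * t ^ 4)
        + m ^ 3 * (224 * t - 76 * t ^ 3) + m ^ 2 * (-1126 + 228 * t ^ 2) + m * (36 * t) - 108 := by
  unfold W1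
  ring

lemma neg_one_le_pow_and_pow_le_one {t : ℝ} (ht : |t| ≤ 1) (j : ℕ) : -1 ≤ t ^ j ∧ t ^ j ≤ 1 :=
  abs_le.mp (by simpa only [abs_pow] using pow_le_one₀ (abs_nonneg t) ht)

lemma W1_top_layers_ge {m t : ℝ} (hm : 2 ≤ m) (ht : |t| ≤ 1) :
    m ^ 12 / 8 ≤ m ^ 12 * (1 / 2 - 3 / 8 * t ^ 2) + m ^ 11 * (3 / 4 * t - 3 / 4 * t ^ 3) := by
  have ht2 : 0 ≤ 1 - t ^ 2 := sub_nonneg.mpr (sq_le_one_iff_abs_le_one t |>.mpr ht)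
  have hmt : 0 ≤ m + 2 * t := by linarith [(abs_le.mp ht).1]
  have key : 0 ≤ m ^ 11 * (1 - t ^ 2) * (m + 2 * t) :=
    mul_nonneg (mul_nonneg (pow_nonneg (by linarith) 11) ht2) hmt
  linear_combination (3 / 8) * key

lemma W1_sq_add_mul_ge {m t : ℝ} (hm : 2 ≤ m) (ht : |t| ≤ 1) :
    m ^ 12 / 8 - 51 / 8 * m ^ 10 - 21 / 4 * m ^ 9 - 41 / 4 * m ^ 8 - 34 * m ^ 7 - 123 * m ^ 5
      - 439 * m ^ 4 - 300 * m ^ 3 - 1126 * m ^ 2 - 36 * m - 108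
      ≤ W1 (m ^ 2) ((m ^ 2 - 10) / 2 + m * t) := by
  rw [W1_sq_add_mul]
  have hm0 : 0 ≤ m := by linarith
  obtain ⟨ht0, ht1⟩ := abs_le.mp ht
  have hp := neg_one_le_pow_and_pow_le_one ht
  have h2 : 0 ≤ t ^ 2 := by positivity
  have h4 : 0 ≤ t ^ 4 := by positivity
  have h6 : 0 ≤ t ^ 6 := by positivity
  have l10 := mul_le_mul_of_nonneg_left
    (show -51 / 8 ≤ -51 / 8 + 9 / 4 * t ^ 2 + 3 / 2 * t ^ 4 by linarith) (pow_nonneg hm0 10)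
  have l9 := mul_le_mul_of_nonneg_left
    (show -21 / 4 ≤ -9 / 4 * t + 3 * t ^ 5 by linarith [hp 5]) (pow_nonneg hm0 9)
  have l8 := mul_le_mul_of_nonneg_left
    (show -41 / 4 ≤ 3 / 4 + 11 * t ^ 2 - 9 * t ^ 4 - 2 * t ^ 6 by linarith [hp 4, hp 6])
    (pow_nonneg hm0 8)
  have l7 := mul_le_mul_of_nonneg_left
    (show -34 ≤ -28 * t - 2 * t ^ 3 - 4 * t ^ 7 by linarith [hp 3, hp 7]) (pow_nonneg hm0 7)
  have l6 := mul_le_mul_of_nonneg_left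
    (show 0 ≤ 351 / 2 - 10 * t ^ 2 - 2 * t ^ 4 + 12 * t ^ 6 by linarith [hp 2, hp 4])
    (pow_nonneg hm0 6)
  have l5 := mul_le_mul_of_nonneg_left
    (show -123 ≤ 47 * t + 32 * t ^ 3 + 44 * t ^ 5 by linarith [hp 3, hp 5]) (pow_nonneg hm0 5)
  have l4 := mul_le_mul_of_nonneg_left
    (show -439 ≤ -157 - 150 * t ^ 2 - 132 * t ^ 4 by linarith [hp 2, hp 4]) (pow_nonneg hm0 4)
  have l3 := mul_le_mul_of_nonneg_left
    (show -300 ≤ 224 * t - 76 * t ^ 3 by linarith [hp 3]) (pow_nonneg hm0 3)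
  have l2 := mul_le_mul_of_nonneg_left
    (show -1126 ≤ -1126 + 228 * t ^ 2 by linarith) (pow_nonneg hm0 2)
  have l1 := mul_le_mul_of_nonneg_left (show -36 ≤ 36 * t by linarith) hm0
  linarith [W1_top_layers_ge hm ht]

lemma W1_lower_bound_pos {m : ℝ} (hm : 10 ≤ m) :
    0 < m ^ 12 / 8 - 51 / 8 * m ^ 10 - 21 / 4 * m ^ 9 - 41 / 4 * m ^ 8 - 34 * m ^ 7 - 123 * m ^ 5
      - 439 * m ^ 4 - 300 * m ^ 3 - 1126 * m ^ 2 - 36 * m - 108 := by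
  have hm0 : 0 < m := by linarith
  have step (d : ℕ) : 10 * m ^ d ≤ m * m ^ d :=
    mul_le_mul_of_nonneg_right hm (pow_nonneg hm0.le d)
  linarith [step 0, step 1, step 2, step 3, step 4, step 5, step 6, step 7, step 8, step 9,
    step 10, step 11]

/-- Positivity of `W₁ = k(pJ₁ − q₁)` for `n ≥ 118` and `(n−10)/2 − √n < k < (n−10)/2 + √n`. -/
theorem W1_pos (n k : ℝ) (hn : 118 ≤ n)
    (hk0 : (n - 10) / 2 - Real.sqrt n < k) (hk1 : k < (n - 10) / 2 + Real.sqrt n) :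
    -4 * k ^ 7 + (12 * n - 128) * k ^ 6 + (-12 * n ^ 2 + 324 * n - 1696) * k ^ 5
      + (4 * n ^ 3 - 264 * n ^ 2 + 3488 * n - 12032) * k ^ 4
      + (68 * n ^ 3 - 2168 * n ^ 2 + 19056 * n - 49216) * k ^ 3
      + (376 * n ^ 3 - 8176 * n ^ 2 + 55104 * n - 115712) * k ^ 2
      + (-(1 / 16) * n ^ 6 + (3 / 4) * n ^ 5 + 732 * n ^ 3 - 13520 * n ^ 2
          + 78336 * n - 144384) * k
      + 384 * n ^ 3 - 6912 * n ^ 2 + 39936 * n - 73728 > 0 := by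
  set m := Real.sqrt n
  have hm : 10 ≤ m := Real.le_sqrt_of_sq_le (by linarith)
  have hn_eq : n = m ^ 2 := (Real.sq_sqrt (by linarith)).symm
  set t := (k - (n - 10) / 2) / m
  have hk_eq : k = (m ^ 2 - 10) / 2 + m * t := by
    rw [← hn_eq, mul_div_cancel₀ _ (by positivity)]
    ring
  have ht : |t| ≤ 1 := by
    rw [abs_div, abs_of_pos (by positivity : 0 < m), div_le_one (by positivity)]
    exact abs_le.mpr ⟨by linarith, by linarith⟩
  change W1 n k > 0
  rw [hn_eq, hk_eq]
  exact (W1_lower_bound_pos hm).trans_le (W1_sq_add_mul_ge (by linarith) ht)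
end

section
/- For every real number n ≥ 30 and every real number k with (n−10)/2 − √n < k < (n−10)/2 + √n, one has W₂(k,n) := 6k⁵ + (144−12n)k⁴ + (6n²−228n+1352)k³ + (84n²−1544n+6272)k² + (−(3/8)n⁴ + 3n³ + 338n² − 4512n + 14464)k + 352n² − 4480n + 13824 > 0. -/
/-!
Centre the variable at the midpoint of the interval, `k = (n - 10)/2 + t` with `|t| < √n`.
In `t`, `W₂` becomes `t⁴(6t + 3n - 6) + a(n) t² + b(n, t) t + c(n)`: the quintic part is
nonnegative, `a(n) ≤ 0` so the quadratic part is smallest at `t² = n`, and `|b(n, t)| ≤ b(n, 0)`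
so the odd part is at least `-b(n, 0) √n`. What remains is a polynomial in `s = √n` of degree
eight with positive leading coefficient, positive once `s² ≥ 30`.
-/

open Real

/-- The polynomial `W₂(k, n)`; note the order of arguments, `W2 n k`. -/
noncomputable def W2 (n k : ℝ) : ℝ :=
  6 * k ^ 5 + (144 - 12 * n) * k ^ 4 + (6 * n ^ 2 - 228 * n + 1352) * k ^ 3
    + (84 * n ^ 2 - 1544 * n + 6272) * k ^ 2
    + (-(3 / 8) * n ^ 4 + 3 * n ^ 3 + 338 * n ^ 2 - 4512 * n + 14464) * k
    + 352 * n ^ 2 - 4480 * n + 13824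

lemma W2_midpoint_add (n t : ℝ) :
    W2 n ((n - 10) / 2 + t) =
      t ^ 4 * (6 * t + 3 * n - 6)
        + (-(3 / 2) * n ^ 3 + 3 * n ^ 2 + 34 * n + 92) * t ^ 2
        + ((3 * n ^ 3 + 3 * n ^ 2 - 80 * n - 106) - (3 * n ^ 2 + 28) * t ^ 2) * t
        + (3 * n ^ 4 - (51 / 2) * n ^ 3 - 51 * n ^ 2 + 427 * n + 554) := by
  unfold W2
  ring

lemma neg_mul_le_mul_of_abs_le {a s x t : ℝ} (hx : |x| ≤ a) (ht : |t| ≤ s) :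
    -(a * s) ≤ x * t := by
  have hxt : |x * t| ≤ a * s := by
    rw [abs_mul]
    exact mul_le_mul hx ht (abs_nonneg t) ((abs_nonneg x).trans hx)
  exact (abs_le.mp hxt).1

section

variable {n t : ℝ}

lemma sq_le_of_abs_le_sqrt (hn : 0 ≤ n) (ht : |t| ≤ √n) : t ^ 2 ≤ n := by
  simpa [sq_abs, sq_sqrt hn] using pow_le_pow_left₀ (abs_nonneg t) ht 2

lemma five_le_sqrt (hn : 30 ≤ n) : 5 ≤ √n :=
  le_sqrt_of_sq_le (by linarith)

lemma quintic_part_nonneg (hn : 30 ≤ n) (ht : |t| ≤ √n) :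
    0 ≤ t ^ 4 * (6 * t + 3 * n - 6) := by
  have hs : √n ^ 2 = n := sq_sqrt (by linarith)
  have h5 := five_le_sqrt hn
  have htl : -√n ≤ t := (abs_le.mp ht).1
  have hlin : 0 ≤ 6 * t + 3 * n - 6 := by nlinarith
  positivity

lemma quadratic_part_ge (hn : 30 ≤ n) (ht : |t| ≤ √n) :
    (-(3 / 2) * n ^ 3 + 3 * n ^ 2 + 34 * n + 92) * n
      ≤ (-(3 / 2) * n ^ 3 + 3 * n ^ 2 + 34 * n + 92) * t ^ 2 :=
  mul_le_mul_of_nonpos_left (sq_le_of_abs_le_sqrt (by linarith) ht) (by nlinarith)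

lemma odd_part_ge (hn : 30 ≤ n) (ht : |t| ≤ √n) :
    -((3 * n ^ 3 + 3 * n ^ 2 - 80 * n - 106) * √n)
      ≤ ((3 * n ^ 3 + 3 * n ^ 2 - 80 * n - 106) - (3 * n ^ 2 + 28) * t ^ 2) * t := by
  have ht2 := sq_le_of_abs_le_sqrt (by linarith) ht
  refine neg_mul_le_mul_of_abs_le (abs_le.mpr ⟨?_, ?_⟩) ht
  · nlinarith [mul_le_mul_of_nonneg_left ht2 (by positivity : (0 : ℝ) ≤ 3 * n ^ 2 + 28)]
  · nlinarith [sq_nonneg t]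

lemma remainder_pos (hn : 30 ≤ n) :
    0 < (3 / 2) * n ^ 4 - (45 / 2) * n ^ 3 - 17 * n ^ 2 + 519 * n + 554
      - (3 * n ^ 3 + 3 * n ^ 2 - 80 * n - 106) * √n := by
  obtain ⟨s, hs0, rfl⟩ : ∃ s, 0 ≤ s ∧ n = s ^ 2 :=
    ⟨√n, sqrt_nonneg n, (sq_sqrt (by linarith)).symm⟩
  have h5 : 5 ≤ s := by nlinarith
  rw [sqrt_sq hs0]
  nlinarith [mul_nonneg (sub_nonneg.2 hn) (pow_nonneg hs0 6),
    mul_nonneg (sub_nonneg.2 h5) (pow_nonneg hs0 7),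
    mul_nonneg (sub_nonneg.2 hn) (pow_nonneg hs0 5), pow_nonneg hs0 3, pow_nonneg hs0 4]

end

/-- Positivity of `W₂ = k(pJ₂ − q₂)` for `n ≥ 30` and `(n−10)/2 − √n < k < (n−10)/2 + √n`. -/
theorem W2_pos (n k : ℝ) (hn : 30 ≤ n)
    (hk0 : (n - 10) / 2 - Real.sqrt n < k) (hk1 : k < (n - 10) / 2 + Real.sqrt n) :
    6 * k ^ 5 + (144 - 12 * n) * k ^ 4 + (6 * n ^ 2 - 228 * n + 1352) * k ^ 3
      + (84 * n ^ 2 - 1544 * n + 6272) * k ^ 2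
      + (-(3 / 8) * n ^ 4 + 3 * n ^ 3 + 338 * n ^ 2 - 4512 * n + 14464) * k
      + 352 * n ^ 2 - 4480 * n + 13824 > 0 := by
  obtain ⟨t, rfl⟩ : ∃ t, k = (n - 10) / 2 + t := ⟨k - (n - 10) / 2, by ring⟩
  have ht : |t| ≤ √n := abs_le.mpr ⟨by linarith, by linarith⟩
  change 0 < W2 n ((n - 10) / 2 + t)
  rw [W2_midpoint_add]
  linarith [quintic_part_nonneg hn ht, quadratic_part_ge hn ht, odd_part_ge hn ht,
    remainder_pos hn]
end

section
/- For every real number n ≥ 12 and every real number k with (n−10)/2 − √n < k < (n−10)/2 + √n, one has W₃(k,n) := −4k³ + (4n−64)k² + (−n²+48n−320)k + 96n − 640 > 0. -/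
/-!
Writing `t = k - (n - 10)/2` for the offset of `k` from the centre of the interval,
`W₃ = 4 (k + 6) (n - t²) + (6n² - 48n - 40 + 20k)`.
On the interval `t² < n` and `k > (n - 10)/2 - √n ≥ -6`, and for `n ≥ 12` the
remainder is positive too, since `√n ≤ n` forces `k > -n/2 - 5`.
-/

namespace QuadharmonicLaneEmden

/-- `W₃ = k (p J₃ - q₃)` with `k = 8/(p - 1)`. -/
def W3 (n k : ℝ) : ℝ :=
  -4 * k ^ 3 + (4 * n - 64) * k ^ 2 + (-n ^ 2 + 48 * n - 320) * k + 96 * n - 640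

theorem W3_eq_mul_add (n k : ℝ) :
    W3 n k = 4 * (k + 6) * (n - (k - (n - 10) / 2) ^ 2) + (6 * n ^ 2 - 48 * n - 40 + 20 * k) := by
  unfold W3; ring

theorem neg_six_lt_of_sub_sqrt_lt {n k : ℝ} (hn : 0 ≤ n) (hk : (n - 10) / 2 - √n < k) :
    -6 < k := by
  nlinarith [Real.sq_sqrt hn, sq_nonneg (√n - 1)]

theorem remainder_pos {n k : ℝ} (hn : 12 ≤ n) (hk : (n - 10) / 2 - √n < k) :
    0 < 6 * n ^ 2 - 48 * n - 40 + 20 * k := by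
  have hsqrt : √n ≤ n := (Real.sqrt_le_left (by linarith)).2 (by nlinarith)
  nlinarith

theorem W3_pos_of_mem_Ioo {n k : ℝ} (hn : 12 ≤ n)
    (hk : k ∈ Set.Ioo ((n - 10) / 2 - √n) ((n - 10) / 2 + √n)) : 0 < W3 n k := by
  obtain ⟨hk0, hk1⟩ := hk
  have hsq : (k - (n - 10) / 2) ^ 2 < n :=
    Real.sq_lt.2 ⟨by linarith, by linarith⟩
  have hk6 := neg_six_lt_of_sub_sqrt_lt (by linarith) hk0
  rw [W3_eq_mul_add]
  exact add_pos (mul_pos (by linarith) (by linarith)) (remainder_pos hn hk0)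

end QuadharmonicLaneEmden

/-- Positivity of `W₃ = k(pJ₃ − q₃)` for `n ≥ 12` and `(n−10)/2 − √n < k < (n−10)/2 + √n`. -/
theorem W3_pos (n k : ℝ) (hn : 12 ≤ n)
    (hk0 : (n - 10) / 2 - Real.sqrt n < k) (hk1 : k < (n - 10) / 2 + Real.sqrt n) :
    -4 * k ^ 3 + (4 * n - 64) * k ^ 2 + (-n ^ 2 + 48 * n - 320) * k + 96 * n - 640 > 0 :=
  QuadharmonicLaneEmden.W3_pos_of_mem_Ioo hn ⟨hk0, hk1⟩
end
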